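/- Every finite biconnected outerplanar simple graph has at least two vertices of degree 2. -/

import Mathlib

open SimpleGraph

/-- The square `G²` of a simple graph `G`: two distinct vertices are adjacent iff
they are adjacent in `G` or have a common neighbor in `G`. -/
def SimpleGraph.square {V : Type*} (G : SimpleGraph V) : SimpleGraph V where
  Adj u v := u ≠ v ∧ (G.Adj u v ∨ ∃ w, G.Adj u w ∧ G.Adj w v)
  symm := ⟨by
    rintro u v ⟨hne, h | ⟨w, h1, h2⟩⟩
    · exact ⟨hne.symm, Or.inl h.symm⟩
    · exact ⟨hne.symm, Or.inr ⟨w, h2.symm, h1.symm⟩⟩⟩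
  loopless := ⟨fun u h => h.1 rfl⟩

/-- A finite simple graph is outerplanar iff it has a one-page book embedding:
a linear order (here realized by an injection into `ℕ`) on its vertices such that
no two edges "cross", i.e. there are no vertices `a < c < b < d` with both
`{a,b}` and `{c,d}` edges. -/
def SimpleGraph.IsOuterplanar {V : Type*} (G : SimpleGraph V) : Prop :=
  ∃ f : V → ℕ, Function.Injective f ∧
    ∀ a b c d : V, G.Adj a b → G.Adj c d →
      ¬(f a < f c ∧ f c < f b ∧ f b < f d)

/-- The degree of a vertex, as the cardinality of its neighbor set. -/
noncomputable def SimpleGraph.deg {V : Type*} (G : SimpleGraph V) (v : V) : ℕ :=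
  (G.neighborSet v).ncard

/-- The maximum degree `Δ` of a finite graph. -/
noncomputable def SimpleGraph.maxDeg {V : Type*} [Fintype V] (G : SimpleGraph V) : ℕ :=
  Finset.univ.sup fun v => G.deg v

/-- The degree of `v` inside the subgraph of `G` induced by the vertex set `s`. -/
noncomputable def SimpleGraph.degIn {V : Type*} (G : SimpleGraph V) (s : Finset V) (v : V) : ℕ :=
  {u | u ∈ s ∧ G.Adj v u}.ncard

/-- The inductiveness (degeneracy) of a finite graph: the maximum over all nonempty
induced subgraphs of the minimum degree of the induced subgraph. -/
noncomputable def SimpleGraph.inductiveness {V : Type*} [Fintype V]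
    (G : SimpleGraph V) : ℕ :=
  Finset.univ.powerset.sup fun s =>
    if h : s.Nonempty then s.inf' h (G.degIn s) else 0

/-- A graph is chordal if every cycle of length at least 4 has a chord: two
vertices of the cycle, adjacent in the graph, whose joining edge is not an edge
of the cycle (i.e. they are nonconsecutive on the cycle). -/
def SimpleGraph.IsChordal {V : Type*} (G : SimpleGraph V) : Prop :=
  ∀ ⦃v : V⦄ (w : G.Walk v v), w.IsCycle → 4 ≤ w.length →
    ∃ a b : V, a ∈ w.support ∧ b ∈ w.support ∧ G.Adj a b ∧ s(a, b) ∉ w.edges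

/-- A finite graph is biconnected if it has at least 3 vertices, is connected,
and deleting any single vertex leaves it connected. -/
def SimpleGraph.Biconnected {V : Type*} [Fintype V] (G : SimpleGraph V) : Prop :=
  3 ≤ Fintype.card V ∧ G.Connected ∧
    ∀ v : V, ((G.induce {u | u ≠ v}).Connected)

/-- `G` is `k`-choosable: for every assignment of lists of exactly `k` colors to
the vertices there is a proper coloring choosing each vertex's color from its list. -/
def SimpleGraph.Choosable {V : Type*} (G : SimpleGraph V) (k : ℕ) : Prop :=
  ∀ L : V → Finset ℕ, (∀ v, (L v).card = k) →
    ∃ c : V → ℕ, (∀ v, c v ∈ L v) ∧ ∀ u v, G.Adj u v → c u ≠ c v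

/-- `F₄`: the 6-vertex graph obtained from the triangle `0 1 2` by adding, for each
edge of the triangle, a new vertex (`3 = y₀₁`, `4 = y₁₂`, `5 = y₀₂`) adjacent to
exactly the two endpoints of that edge. -/
def F4 : SimpleGraph (Fin 6) :=
  SimpleGraph.fromEdgeSet
    {s(0, 1), s(1, 2), s(0, 2), s(3, 0), s(3, 1), s(4, 1), s(4, 2), s(5, 0), s(5, 2)}

/-- `F₆`: the 12-vertex graph obtained from `F₄` by adding, for each of the six edges
`xᵢyᵢⱼ` between a triangle vertex and an added vertex, a new vertex adjacent to
exactly the two endpoints of that edge (vertices `6,…,11`). -/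
def F6 : SimpleGraph (Fin 12) :=
  SimpleGraph.fromEdgeSet
    {s(0, 1), s(1, 2), s(0, 2), s(3, 0), s(3, 1), s(4, 1), s(4, 2), s(5, 0), s(5, 2),
     s(6, 0), s(6, 3), s(7, 1), s(7, 3), s(8, 1), s(8, 4), s(9, 2), s(9, 4),
     s(10, 0), s(10, 5), s(11, 2), s(11, 5)}

/-- The rigid ladder `RL n`.  For even `n = 2k` it has vertices `u₁,…,u_k,v₁,…,v_k`
and edges `uᵢvᵢ, uᵢuᵢ₊₁, uᵢvᵢ₊₁, vᵢvᵢ₊₁` (for `1 ≤ i ≤ k-1`) together with `u_k v_k`;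
for odd `n` it is `RL (n+1)` with the vertex `u_{(n+1)/2}` deleted.  We use the zigzag
labelling `vᵢ ↦ 2i - 2`, `uᵢ ↦ 2i - 1` (under which deleting `u_{(n+1)/2} = n` from
`RL (n+1)` leaves exactly the labels `0,…,n-1`); under this labelling two vertices are
adjacent iff their labels differ by exactly 1 or 2. -/
def rigidLadder (n : ℕ) : SimpleGraph (Fin n) where
  Adj a b := a ≠ b ∧ Nat.dist a.val b.val ≤ 2
  symm := ⟨by
    rintro a b ⟨h1, h2⟩
    exact ⟨h1.symm, by rwa [Nat.dist_comm]⟩⟩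
  loopless := ⟨fun a h => h.1 rfl⟩

/-! Let `f` be a book embedding of `G`. Biconnectivity forces vertices that are consecutive
in the order to be adjacent, and forces some edge to pass over any vertex that is neither first
nor last. Among such edges take `rs` of minimal span: planarity confines every neighbour of a
vertex `c` strictly between `r` and `s` to `[r, s]`, and minimality forbids neighbours that are not next to `c`; so `c` has degree 2. Crossing is a property of the
cyclic order, so cutting the circle at `c` gives a book embedding in which `c` comes first; the
same argument then yields a second vertex of degree 2, strictly inside an edge, hence not `c`. -/

def cyclicShift {V : Type*} (f : V → ℕ) (N k : ℕ) (z : V) : ℕ :=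
  if f z < k then f z + N else f z

theorem cyclicShift_self_le {V : Type*} {f : V → ℕ} {N : ℕ} (hN : ∀ z, f z < N)
    (c z : V) : cyclicShift f N (f c) c ≤ cyclicShift f N (f c) z := by
  have := hN c
  unfold cyclicShift
  split_ifs <;> omega

namespace SimpleGraph

variable {V : Type*} {G : SimpleGraph V} {f : V → ℕ}

def IsBookEmbedding (G : SimpleGraph V) (f : V → ℕ) : Prop :=
  Function.Injective f ∧
    ∀ a b c d : V, G.Adj a b → G.Adj c d → ¬(f a < f c ∧ f c < f b ∧ f b < f d)

theorem exists_adj_boundary_of_connected_induce_ne {v a b : V} {S : Set V}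
    (hv : (G.induce {u | u ≠ v}).Connected) (hvS : v ∉ S) (ha : a ∈ S) (hb : b ∉ S)
    (hbv : b ≠ v) : ∃ u w, u ∈ S ∧ w ∉ S ∧ w ≠ v ∧ G.Adj u w := by
  obtain ⟨p⟩ := hv.preconnected ⟨a, fun h => hvS (h ▸ ha)⟩ ⟨b, hbv⟩
  let p' := p.map (Embedding.induce {u | u ≠ v}).toHom
  obtain ⟨d, hd, hd₁, hd₂⟩ := p'.exists_boundary_dart S ha hb
  have hsupp : d.snd ∈ p'.support := Walk.dart_snd_mem_support_of_mem_darts _ hd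
  obtain ⟨z, -, hz⟩ := List.mem_map.mp (by rwa [Walk.support_map] at hsupp)
  exact ⟨d.fst, d.snd, hd₁, hd₂, hz ▸ z.2, d.adj⟩

theorem exists_adj_passing_over [Fintype V] (hf : Function.Injective f)
    (hcard : 3 ≤ Fintype.card V) (hcut : ∀ v, (G.induce {u | u ≠ v}).Connected) :
    ∃ p q m, G.Adj p q ∧ f p < f m ∧ f m < f q := by
  classical
  have : Nonempty V := Fintype.card_pos_iff.mp (by omega)
  obtain ⟨x, hx⟩ := Finite.exists_min f
  obtain ⟨y, hy⟩ := Finite.exists_max f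
  have hxy : ({x, y} : Finset V).card < (Finset.univ : Finset V).card := by
    rw [Finset.card_univ]
    exact Finset.card_le_two.trans_lt (by omega)
  obtain ⟨m, -, hm⟩ := Finset.exists_mem_notMem_of_card_lt_card hxy
  simp only [Finset.mem_insert, Finset.mem_singleton, not_or] at hm
  have hxm : f x < f m := (hx m).lt_of_ne (hf.ne (Ne.symm hm.1))
  have hmy : f m < f y := (hy m).lt_of_ne (hf.ne hm.2)
  obtain ⟨p, q, hp, hq, hqm, hpq⟩ := exists_adj_boundary_of_connected_induce_ne (hcut m)
    (S := {z | f z < f m}) (lt_irrefl (f m)) hxm (lt_asymm hmy) (Ne.symm hm.2)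
  exact ⟨p, q, m, hpq, hp, (not_lt.mp hq).lt_of_ne (hf.ne hqm).symm⟩

theorem IsBookEmbedding.adj_of_forall_notMem_Ioo [Finite V] (hf : G.IsBookEmbedding f)
    (hconn : G.Connected) (hcut : ∀ v, (G.induce {u | u ≠ v}).Connected) {a b : V}
    (hab : f a < f b) (hgap : ∀ z, f z ∉ Set.Ioo (f a) (f b)) : G.Adj a b := by
  obtain ⟨p⟩ := hconn.preconnected a b
  obtain ⟨e, -, he₁, he₂⟩ :=
    p.exists_boundary_dart {z | f z ≤ f a} (le_refl (f a)) (not_le.mpr hab)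
  obtain ⟨⟨u, w⟩, ⟨huw, hua, hbw⟩, hmin⟩ := Set.exists_min_image
    {e : V × V | G.Adj e.1 e.2 ∧ f e.1 ≤ f a ∧ f b ≤ f e.2} (fun e => f e.2 - f e.1)
    (Set.toFinite _) ⟨(e.fst, e.snd), e.adj, he₁, show f b ≤ f e.snd by
      have := hgap e.snd; simp only [Set.mem_ofPred_eq, Set.mem_Ioo] at he₂ this; omega⟩
  dsimp only at huw hua hbw
  have hmin' : ∀ c d, G.Adj c d → f c ≤ f a → f b ≤ f d → f w - f u ≤ f d - f c :=
    fun c d h₁ h₂ h₃ => hmin (c, d) ⟨h₁, h₂, h₃⟩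
  by_contra hnadj
  have hne := G.ne_of_adj huw
  -- `uw` is an edge of minimal span over the gap; if it is not `ab`, an edge leaving the part
  -- of `(u, w)` on one side of the gap, in `G - u` or `G - w`, crosses `uw` or has smaller span.
  rcases hua.lt_or_eq with hua | hua
  · obtain ⟨c, d, ⟨hc₁, hc₂⟩, hd, hdu, hcd⟩ :=
      exists_adj_boundary_of_connected_induce_ne (hcut u) (S := {z | f u < f z ∧ f z ≤ f a})
        (fun h => lt_irrefl _ h.1) ⟨hua, le_rfl⟩ (fun h => by have := h.2; omega) hne.symm
    have h₁ := hf.2 d c u w hcd.symm huw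
    have h₂ := hf.2 u w c d huw hcd
    have h₃ := hmin' c d hcd
    have h₄ := hgap d
    have h₅ := hf.1.ne hdu
    simp only [Set.mem_ofPred_eq, Set.mem_Ioo] at hd h₄
    omega
  · obtain rfl := hf.1 hua
    have hbw : f b < f w := hbw.lt_of_ne fun h => hnadj (hf.1 h ▸ huw)
    obtain ⟨c, d, ⟨hc₁, hc₂⟩, hd, hdw, hcd⟩ :=
      exists_adj_boundary_of_connected_induce_ne (hcut w) (S := {z | f b ≤ f z ∧ f z < f w})
        (fun h => lt_irrefl _ h.2) ⟨le_rfl, hbw⟩ (fun h => by have := h.1; omega) hne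
    have h₁ := hf.2 d c u w hcd.symm huw
    have h₂ := hf.2 u w c d huw hcd
    have h₃ := hmin' d c hcd.symm
    have h₄ := hgap d
    have h₅ := hf.1.ne hdw
    simp only [Set.mem_ofPred_eq, Set.mem_Ioo] at hd h₄
    omega

theorem IsBookEmbedding.deg_eq_two_of_minimal_span [Finite V] (hf : G.IsBookEmbedding f)
    (hconn : G.Connected) (hcut : ∀ v, (G.induce {u | u ≠ v}).Connected) {r s c : V}
    (hrs : G.Adj r s) (hrc : f r < f c) (hcs : f c < f s)
    (hmin : ∀ p q m, G.Adj p q → f p < f m → f m < f q → f s - f r ≤ f q - f p) :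
    G.deg c = 2 := by
  obtain ⟨x, hxc, hxmax⟩ := Set.exists_max_image {z | f z < f c} f (Set.toFinite _) ⟨r, hrc⟩
  obtain ⟨y, hcy, hymin⟩ := Set.exists_min_image {z | f c < f z} f (Set.toFinite _) ⟨s, hcs⟩
  have hxadj : G.Adj x c :=
    hf.adj_of_forall_notMem_Ioo hconn hcut hxc fun z hz => (hxmax z hz.2).not_gt hz.1
  have hyadj : G.Adj c y :=
    hf.adj_of_forall_notMem_Ioo hconn hcut hcy fun z hz => (hymin z hz.1).not_gt hz.2
  -- A neighbour `d` of `c` lies in `[r, s]` by planarity, and the edge `cd` passes over no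
  -- vertex, since its span would be smaller than that of `rs`.
  have hnbr : ∀ d, G.Adj c d → d = x ∨ d = y := by
    intro d hcd
    have h₁ := hf.2 r s c d hrs hcd
    have h₂ := hf.2 d c r s hcd.symm hrs
    have h₃ := hmin c d y hcd
    have h₄ := hmin d c x hcd.symm
    have h₅ := hxmax d
    have h₆ := hymin d
    have h₇ := hf.1.ne (G.ne_of_adj hcd)
    simp only [Set.mem_ofPred_eq] at hxc hcy h₅ h₆
    rcases (by omega : f d = f x ∨ f d = f y) with h | h
    exacts [.inl (hf.1 h), .inr (hf.1 h)]
  rw [deg, Set.ncard_eq_two]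
  refine ⟨x, y, fun h => (hxc.trans hcy).ne (congrArg f h), Set.ext fun d => ⟨hnbr d, ?_⟩⟩
  rintro (rfl | rfl)
  exacts [hxadj.symm, hyadj]

theorem IsBookEmbedding.exists_deg_eq_two [Finite V] (hf : G.IsBookEmbedding f)
    (hconn : G.Connected) (hcut : ∀ v, (G.induce {u | u ≠ v}).Connected)
    (hover : ∃ p q m, G.Adj p q ∧ f p < f m ∧ f m < f q) :
    ∃ c x, f x < f c ∧ G.deg c = 2 := by
  obtain ⟨p, q, m, hpq, hpm, hmq⟩ := hover
  obtain ⟨⟨⟨r, s⟩, c⟩, ⟨hrs, hrc, hcs⟩, hmin⟩ := Set.exists_min_image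
    {t : (V × V) × V | G.Adj t.1.1 t.1.2 ∧ f t.1.1 < f t.2 ∧ f t.2 < f t.1.2}
    (fun t => f t.1.2 - f t.1.1) (Set.toFinite _) ⟨((p, q), m), hpq, hpm, hmq⟩
  exact ⟨c, r, hrc, hf.deg_eq_two_of_minimal_span hconn hcut hrs hrc hcs
    fun p q m h₁ h₂ h₃ => hmin ((p, q), m) ⟨h₁, h₂, h₃⟩⟩

-- Labels below `k` are moved past all others: this rotates the circular order, and whether two
-- chords of a circle cross depends only on the circular order of their ends.
theorem IsBookEmbedding.cyclicShift (hf : G.IsBookEmbedding f) {N : ℕ} (hN : ∀ z, f z < N)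
    (k : ℕ) : G.IsBookEmbedding (cyclicShift f N k) := by
  refine ⟨fun a b h => hf.1 ?_, fun a b c d hab hcd => ?_⟩
  · have := hN a
    have := hN b
    unfold _root_.cyclicShift at h
    split_ifs at h <;> omega
  · have h₁ := hf.2 a b c d hab hcd
    have h₂ := hf.2 c d b a hcd hab.symm
    have h₃ := hf.2 b a d c hab.symm hcd.symm
    have h₄ := hf.2 d c a b hcd.symm hab
    have := hN a
    have := hN b
    have := hN c
    have := hN d
    unfold _root_.cyclicShift
    split_ifs <;> omega

end SimpleGraph

/-- Every finite biconnected outerplanar graph has at least two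
vertices of degree 2. -/
theorem stmt5 {V : Type*} [Fintype V] (G : SimpleGraph V)
    (hout : G.IsOuterplanar) (hbi : G.Biconnected) :
    ∃ u v : V, u ≠ v ∧ G.deg u = 2 ∧ G.deg v = 2 := by
  obtain ⟨f, hf⟩ : ∃ f, G.IsBookEmbedding f := hout
  obtain ⟨hcard, hconn, hcut⟩ := hbi
  obtain ⟨c, -, -, hc⟩ :=
    hf.exists_deg_eq_two hconn hcut (exists_adj_passing_over hf.1 hcard hcut)
  obtain ⟨M, hM⟩ := (Set.finite_range f).bddAbove
  have hN : ∀ z, f z < M + 1 := fun z => Nat.lt_succ_of_le (hM ⟨z, rfl⟩)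
  have hg := hf.cyclicShift hN (f c)
  obtain ⟨c', x, hxc', hc'⟩ :=
    hg.exists_deg_eq_two hconn hcut (exists_adj_passing_over hg.1 hcard hcut)
  refine ⟨c, c', ?_, hc, hc'⟩
  rintro rfl
  exact (cyclicShift_self_le hN c x).not_gt hxc'
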